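/- Let $m \ge 2$ be an integer and let $b_1, \dots, b_m$ be real numbers with $\sum_{i=1}^m b_i = 0$. Then $-\frac{m-2}{\sqrt{m(m-1)}}\left(\sum_{i=1}^m b_i^2\right)^{3/2} \le \sum_{i=1}^m b_i^3 \le \frac{m-2}{\sqrt{m(m-1)}}\left(\sum_{i=1}^m b_i^2\right)^{3/2}$. -/

import Mathlib

/-!
Put `S = ∑ bᵢ²` and `s = √(S / (m(m-1)))`. Cauchy–Schwarz on the other `m - 1` entries, whose
sum is `-bᵢ`, gives `m bᵢ² ≤ (m-1) S`, i.e. `bᵢ ≤ (m-1) s`. On that range the cubic `x³` lies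
below the cubic that touches it doubly at `-s` and meets it at `(m-1) s`; summing this bound and
using `∑ bᵢ = 0` and `m(m-1)s² = S` gives `∑ bᵢ³ ≤ (m-2) s S`, which is the upper bound. The
lower bound is the upper bound for `-b`. Equality holds when one entry is `(m-1) s` and the others
are `-s`.
-/

open Finset

theorem cube_le_of_le_sub_one_mul {x s n : ℝ} (hx : x ≤ (n - 1) * s) :
    x ^ 3 ≤ (n - 3) * s * x ^ 2 + (2 * n - 3) * s ^ 2 * x + (n - 1) * s ^ 3 := by
  -- the difference is `(x + s)² ((n - 1) s - x)`
  nlinarith [mul_nonneg (sq_nonneg (x + s)) (sub_nonneg.2 hx)]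

section SumEqZero

variable {ι : Type*} [Fintype ι] {b : ι → ℝ}

theorem card_mul_sq_le_of_sum_eq_zero (hb : ∑ j, b j = 0) (i : ι) :
    Fintype.card ι * b i ^ 2 ≤ (Fintype.card ι - 1) * ∑ j, b j ^ 2 := by
  classical
  have hcard : ((univ.erase i).card : ℝ) = Fintype.card ι - 1 := by
    rw [← card_univ, ← card_erase_add_one (mem_univ i)]
    push_cast
    ring
  have hsum : ∑ j ∈ univ.erase i, b j = -b i := by
    linarith [sum_erase_add univ b (mem_univ i)]
  have hsq : ∑ j ∈ univ.erase i, b j ^ 2 = ∑ j, b j ^ 2 - b i ^ 2 := by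
    linarith [sum_erase_add univ (fun j ↦ b j ^ 2) (mem_univ i)]
  have hcs := sq_sum_le_card_mul_sum_sq (s := univ.erase i) (f := b)
  rw [hsum, hcard, hsq] at hcs
  linarith

theorem le_sub_one_mul_of_sum_eq_zero (hb : ∑ j, b j = 0) {s : ℝ} (hs : 0 ≤ s)
    (hS : Fintype.card ι * (Fintype.card ι - 1) * s ^ 2 = ∑ j, b j ^ 2) (i : ι) :
    b i ≤ (Fintype.card ι - 1) * s := by
  set n : ℝ := (Fintype.card ι : ℝ)
  have hn : 1 ≤ n := by
    have : Nonempty ι := ⟨i⟩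
    exact Nat.one_le_cast.2 Fintype.card_pos
  have hsq : b i ^ 2 ≤ ((n - 1) * s) ^ 2 := by
    have := card_mul_sq_le_of_sum_eq_zero hb i
    rw [← hS] at this
    nlinarith
  exact le_of_sq_le_sq hsq (mul_nonneg (by linarith) hs)

theorem sum_cube_le_of_sum_eq_zero (hb : ∑ j, b j = 0) {s : ℝ} (hs : 0 ≤ s)
    (hS : Fintype.card ι * (Fintype.card ι - 1) * s ^ 2 = ∑ j, b j ^ 2) :
    ∑ j, b j ^ 3 ≤ (Fintype.card ι - 2) * s * ∑ j, b j ^ 2 := by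
  set n : ℝ := (Fintype.card ι : ℝ)
  calc ∑ j, b j ^ 3
      ≤ ∑ j, ((n - 3) * s * b j ^ 2 + (2 * n - 3) * s ^ 2 * b j + (n - 1) * s ^ 3) :=
        sum_le_sum fun j _ ↦ cube_le_of_le_sub_one_mul (le_sub_one_mul_of_sum_eq_zero hb hs hS j)
    _ = (n - 3) * s * ∑ j, b j ^ 2 + n * (n - 1) * s ^ 3 := by
        simp only [sum_add_distrib, ← mul_sum, hb, sum_const, card_univ, nsmul_eq_mul]
        ring
    _ = (n - 2) * s * ∑ j, b j ^ 2 := by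
        rw [← hS]
        ring

end SumEqZero

theorem okumura_lemma (m : ℕ) (hm : 2 ≤ m) (b : Fin m → ℝ)
    (hsum : ∑ i, b i = 0) :
    -(((m : ℝ) - 2) / Real.sqrt ((m : ℝ) * ((m : ℝ) - 1))) *
        (∑ i, (b i) ^ 2) ^ ((3 : ℝ) / 2) ≤ ∑ i, (b i) ^ 3 ∧
    ∑ i, (b i) ^ 3 ≤
      (((m : ℝ) - 2) / Real.sqrt ((m : ℝ) * ((m : ℝ) - 1))) *
        (∑ i, (b i) ^ 2) ^ ((3 : ℝ) / 2) := by
  set S := ∑ i, b i ^ 2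
  have hS : 0 ≤ S := sum_nonneg fun i _ ↦ sq_nonneg (b i)
  have hq : 0 < (m : ℝ) * (m - 1) := by
    have : (2 : ℝ) ≤ m := by exact_mod_cast hm
    nlinarith
  set s := √S / √((m : ℝ) * (m - 1))
  have hs : 0 ≤ s := by positivity
  have hsS : m * (m - 1) * s ^ 2 = S := by
    rw [div_pow, Real.sq_sqrt hS, Real.sq_sqrt hq.le]
    exact mul_div_cancel₀ S hq.ne'
  have hrhs : ((m : ℝ) - 2) / √((m : ℝ) * (m - 1)) * S ^ ((3 : ℝ) / 2) = (m - 2) * s * S := by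
    rw [show (3 : ℝ) / 2 = 1 + 1 / 2 by norm_num, Real.rpow_add' hS (by norm_num),
      Real.rpow_one, ← Real.sqrt_eq_rpow]
    ring
  have hupper := sum_cube_le_of_sum_eq_zero (b := b) hsum hs (by simpa using hsS)
  have hlower := sum_cube_le_of_sum_eq_zero (b := -b) (by simp [hsum]) hs (by simpa using hsS)
  simp only [Fintype.card_fin, Pi.neg_apply, neg_sq, Odd.neg_pow (by decide : Odd 3),
    sum_neg_distrib] at hupper hlower
  constructor <;> linarith
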